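/- Fix w* > 0 and γ ∈ (1,2), and let T(w) = w - (γ/σ'(w*))·(σ(w) - σ(w*)). Then T has exactly two critical points w_ℓ < 0 < w_r with w_ℓ = -w_r, determined by σ'(w_r) = σ'(w*)/γ; T'(w) > 0 for w < w_ℓ and w > w_r, and T'(w) < 0 on (w_ℓ, w_r); w_ℓ is a local maximum and w_r is a local minimum of T; and w* is the unique fixed point of T. -/

import Mathlib

noncomputable def sigmoid (w : ℝ) : ℝ := 1 / (1 + Real.exp (-w))

/-!
`T'(w) = 1 - (γ / σ'(w*)) σ'(w)`, and `σ' = σ (1 - σ)` is even and strictly decreasing in `|w|`,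
tending to `0` at infinity. Since `γ > 1`, the level `σ'(w*) / γ` lies strictly between `0` and
`σ'(w*)`, so it is attained at exactly the two points `±w_r`, with `w_r > w*`, and `T'` is
negative between them and positive outside. Finally `T w = w` iff `σ w = σ w*`, and `σ` is
injective.
-/

open Set Filter Topology

lemma sigmoid_eq_real_sigmoid : sigmoid = Real.sigmoid :=
  funext fun _ => one_div _

lemma sigmoid_injective : Function.Injective sigmoid :=
  sigmoid_eq_real_sigmoid ▸ Real.sigmoid_injective

lemma deriv_sigmoid (w : ℝ) : deriv sigmoid w = Real.sigmoid w * (1 - Real.sigmoid w) := by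
  rw [sigmoid_eq_real_sigmoid, Real.deriv_sigmoid]

lemma hasDerivAt_sigmoid (w : ℝ) : HasDerivAt sigmoid (deriv sigmoid w) w := by
  rw [deriv_sigmoid, sigmoid_eq_real_sigmoid]
  exact Real.hasDerivAt_sigmoid w

lemma continuous_deriv_sigmoid : Continuous (deriv sigmoid) := by
  simp only [funext deriv_sigmoid]
  fun_prop

lemma deriv_sigmoid_pos (w : ℝ) : 0 < deriv sigmoid w := by
  rw [deriv_sigmoid]
  exact mul_pos (Real.sigmoid_pos w) (sub_pos.2 (Real.sigmoid_lt_one w))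

lemma deriv_sigmoid_abs (w : ℝ) : deriv sigmoid |w| = deriv sigmoid w := by
  rcases abs_choice w with h | h <;> rw [h]
  rw [deriv_sigmoid, deriv_sigmoid, Real.sigmoid_neg]
  ring

lemma deriv_sigmoid_strictAntiOn : StrictAntiOn (deriv sigmoid) (Ici 0) := by
  intro a ha b _ hab
  have hσa : 1 / 2 ≤ Real.sigmoid a := by
    simpa [one_div] using Real.sigmoid_le (mem_Ici.1 ha)
  have hσ : Real.sigmoid a < Real.sigmoid b := Real.sigmoid_lt hab
  rw [deriv_sigmoid, deriv_sigmoid]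
  -- `σ b (1 - σ b) - σ a (1 - σ a) = (σ b - σ a) (1 - σ a - σ b)`, and `σ a + σ b > 1`
  nlinarith

lemma deriv_sigmoid_lt_iff {a b : ℝ} : deriv sigmoid a < deriv sigmoid b ↔ |b| < |a| := by
  rw [← deriv_sigmoid_abs a, ← deriv_sigmoid_abs b]
  exact deriv_sigmoid_strictAntiOn.lt_iff_gt (abs_nonneg a) (abs_nonneg b)

lemma deriv_sigmoid_eq_iff {a b : ℝ} : deriv sigmoid a = deriv sigmoid b ↔ |a| = |b| := by
  rw [← deriv_sigmoid_abs a, ← deriv_sigmoid_abs b]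
  exact (deriv_sigmoid_strictAntiOn.eq_iff_eq (abs_nonneg a) (abs_nonneg b)).trans eq_comm

lemma tendsto_deriv_sigmoid_atTop : Tendsto (deriv sigmoid) atTop (𝓝 0) := by
  have h1 : Tendsto (fun _ : ℝ => (1 : ℝ)) atTop (𝓝 1) := tendsto_const_nhds
  simpa [funext deriv_sigmoid] using
    Real.tendsto_sigmoid_atTop.mul (h1.sub Real.tendsto_sigmoid_atTop)

lemma exists_ge_deriv_sigmoid_eq {a y : ℝ} (hy : 0 < y) (hya : y ≤ deriv sigmoid a) :
    ∃ w, a ≤ w ∧ deriv sigmoid w = y := by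
  obtain ⟨b, hby, hab⟩ :=
    ((tendsto_deriv_sigmoid_atTop.eventually (gt_mem_nhds hy)).and (eventually_ge_atTop a)).exists
  obtain ⟨w, hw, hwy⟩ :=
    intermediate_value_Icc' hab continuous_deriv_sigmoid.continuousOn ⟨hby.le, hya⟩
  exact ⟨w, hw.1, hwy⟩

lemma hasDerivAt_sub_mul_sigmoid_sub (c s w : ℝ) :
    HasDerivAt (fun w => w - c * (sigmoid w - s)) (1 - c * deriv sigmoid w) w :=
  (hasDerivAt_id w).sub (((hasDerivAt_sigmoid w).sub_const s).const_mul c)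

lemma one_sub_mul_deriv_sigmoid_pos_iff {c r : ℝ} (w : ℝ) (hc : 0 < c) (hr : 0 ≤ r)
    (hcr : c * deriv sigmoid r = 1) : 0 < 1 - c * deriv sigmoid w ↔ r < |w| := by
  rw [← hcr, ← mul_sub, mul_pos_iff_of_pos_left hc, sub_pos, deriv_sigmoid_lt_iff,
    abs_of_nonneg hr]

lemma one_sub_mul_deriv_sigmoid_neg_iff {c r : ℝ} (w : ℝ) (hc : 0 < c) (hr : 0 ≤ r)
    (hcr : c * deriv sigmoid r = 1) : 1 - c * deriv sigmoid w < 0 ↔ |w| < r := by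
  rw [← hcr, ← mul_sub, ← neg_pos, ← mul_neg, mul_pos_iff_of_pos_left hc, neg_pos, sub_neg,
    deriv_sigmoid_lt_iff, abs_of_nonneg hr]

lemma one_sub_mul_deriv_sigmoid_eq_zero_iff {c r : ℝ} (w : ℝ) (hr : 0 ≤ r)
    (hcr : c * deriv sigmoid r = 1) : 1 - c * deriv sigmoid w = 0 ↔ w = r ∨ w = -r := by
  have hc : c ≠ 0 := left_ne_zero_of_mul_eq_one hcr
  rw [← hcr, ← mul_sub, mul_eq_zero, or_iff_right hc, sub_eq_zero, deriv_sigmoid_eq_iff,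
    abs_of_nonneg hr, eq_comm, abs_eq hr]

theorem gd_map_shape_general
    (wstar γ : ℝ) (hwstar : 0 < wstar) (hγ1 : 1 < γ)
    (T : ℝ → ℝ)
    (hT : ∀ w, T w = w - (γ / deriv sigmoid wstar) * (sigmoid w - sigmoid wstar)) :
    ∃ wr : ℝ, 0 < wr ∧
      deriv sigmoid wr = deriv sigmoid wstar / γ ∧
      (∀ w, deriv T w = 0 ↔ w = wr ∨ w = -wr) ∧
      (∀ w, w < -wr → 0 < deriv T w) ∧
      (∀ w, wr < w → 0 < deriv T w) ∧
      (∀ w ∈ Set.Ioo (-wr) wr, deriv T w < 0) ∧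
      IsLocalMax T (-wr) ∧ IsLocalMin T wr ∧
      (∀ w, T w = w ↔ w = wstar) := by
  set c := γ / deriv sigmoid wstar
  have hγ : 0 < γ := zero_lt_one.trans hγ1
  have hd : 0 < deriv sigmoid wstar := deriv_sigmoid_pos wstar
  have hc : 0 < c := div_pos hγ hd
  obtain ⟨wr, hwr_ge, hwr⟩ :=
    exists_ge_deriv_sigmoid_eq (div_pos hd hγ) (div_le_self hd.le hγ1.le)
  have hr : 0 < wr := hwstar.trans_le hwr_ge
  have hcr : c * deriv sigmoid wr = 1 := by
    simp only [c, hwr]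
    field_simp
  have hTderiv (w : ℝ) : HasDerivAt T (1 - c * deriv sigmoid w) w :=
    funext hT ▸ hasDerivAt_sub_mul_sigmoid_sub c _ w
  have hTdiff : Differentiable ℝ T := fun w => (hTderiv w).differentiableAt
  have hpos (w : ℝ) (hw : wr < |w|) : 0 < deriv T w := by
    rwa [(hTderiv w).deriv, one_sub_mul_deriv_sigmoid_pos_iff w hc hr.le hcr]
  have hneg (w : ℝ) (hw : |w| < wr) : deriv T w < 0 := by
    rwa [(hTderiv w).deriv, one_sub_mul_deriv_sigmoid_neg_iff w hc hr.le hcr]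
  refine ⟨wr, hr, hwr, fun w => ?_, fun w hw => hpos w (lt_abs.2 (Or.inr (by linarith))),
    fun w hw => hpos w (lt_abs.2 (Or.inl hw)), fun w hw => hneg w (abs_lt.2 hw), ?_, ?_,
    fun w => ?_⟩
  · rw [(hTderiv w).deriv, one_sub_mul_deriv_sigmoid_eq_zero_iff w hr.le hcr]
  · exact isLocalMax_of_deriv_Ioo (a := -wr - 1) (by linarith) (by linarith)
      hTdiff.continuous.continuousAt hTdiff.differentiableOn hTdiff.differentiableOn
      (fun w hw => (hpos w (lt_abs.2 (Or.inr (by linarith [hw.2])))).le)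
      (fun w hw => (hneg w (abs_lt.2 hw)).le)
  · exact isLocalMin_of_deriv_Ioo (c := wr + 1) (by linarith) (by linarith)
      hTdiff.continuous.continuousAt hTdiff.differentiableOn hTdiff.differentiableOn
      (fun w hw => (hneg w (abs_lt.2 hw)).le)
      (fun w hw => (hpos w (lt_abs.2 (Or.inl hw.1))).le)
  · rw [hT, sub_eq_self, mul_eq_zero, or_iff_right hc.ne', sub_eq_zero, sigmoid_injective.eq_iff]

theorem gd_map_shape
    (wstar γ : ℝ) (hwstar : 0 < wstar) (hγ1 : 1 < γ) (hγ2 : γ < 2)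
    (T : ℝ → ℝ)
    (hT : ∀ w, T w = w - (γ / deriv sigmoid wstar) * (sigmoid w - sigmoid wstar)) :
    ∃ wr : ℝ, 0 < wr ∧
      deriv sigmoid wr = deriv sigmoid wstar / γ ∧
      (∀ w, deriv T w = 0 ↔ w = wr ∨ w = -wr) ∧
      (∀ w, w < -wr → 0 < deriv T w) ∧
      (∀ w, wr < w → 0 < deriv T w) ∧
      (∀ w ∈ Set.Ioo (-wr) wr, deriv T w < 0) ∧
      IsLocalMax T (-wr) ∧ IsLocalMin T wr ∧
      (∀ w, T w = w ↔ w = wstar) :=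
  gd_map_shape_general wstar γ hwstar hγ1 T hT
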